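/- arXiv:1012.5788 — 2 statements merged into one kernel-verified Lean document; each statement's English description precedes it below -/
import Mathlib

section
/- Let φ : [0, π/2] → ℝ be a solution of the ODE φ''(x) − tan(x)·φ'(x) + 2φ(x) = 0 with initial conditions φ(0) = 1, φ'(0) = 0 (the rotationally invariant solution of (Δ+2)φ = 0 on the sphere regular at the equator). If φ(x) > 0 on [0, x₀) and φ(x₀) = 0 for some x₀ ∈ (0, π/2), then φ'(x) < 0 for all x ∈ (0, x₀). -/
open Set Real

/-! The ODE says `(cos · φ')' = -2 cos · φ`. Hence `cos · φ'` strictly decreases wherever `φ > 0`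
on `(-π/2, π/2)`, and since it vanishes at `0`, `φ' < 0` on `(0, x₀)`. -/

theorem hasDerivAt_cos_mul_deriv_of_ode {φ : ℝ → ℝ} {c y : ℝ}
    (hd : DifferentiableAt ℝ (deriv φ) y) (hcos : cos y ≠ 0)
    (hode : deriv (deriv φ) y - tan y * deriv φ y + c * φ y = 0) :
    HasDerivAt (fun x => cos x * deriv φ x) (-c * cos y * φ y) y := by
  refine ((hasDerivAt_cos y).mul hd.hasDerivAt).congr_deriv ?_
  have hsin : sin y = tan y * cos y := by rw [tan_eq_sin_div_cos, div_mul_cancel₀ _ hcos]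
  linear_combination cos y * hode - deriv φ y * hsin

theorem cos_mul_deriv_lt_of_ode {φ : ℝ → ℝ} {c a b : ℝ} (hφ : ContDiff ℝ 2 φ) (hc : 0 < c)
    (ha : -(π / 2) ≤ a) (hab : a < b) (hb : b ≤ π / 2)
    (hode : ∀ y ∈ Ioo a b, deriv (deriv φ) y - tan y * deriv φ y + c * φ y = 0)
    (hpos : ∀ y ∈ Ioo a b, 0 < φ y) :
    cos b * deriv φ b < cos a * deriv φ a := by
  have hφ' : ContDiff ℝ 1 (deriv φ) := (contDiff_succ_iff_deriv (n := 1)).1 hφ |>.2.2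
  refine strictAntiOn_of_deriv_neg (f := fun x => cos x * deriv φ x) (convex_Icc a b)
    (continuous_cos.mul hφ'.continuous).continuousOn (fun y hy => ?_)
    (left_mem_Icc.2 hab.le) (right_mem_Icc.2 hab.le) hab
  rw [interior_Icc] at hy
  have hcos : 0 < cos y := cos_pos_of_mem_Ioo ⟨ha.trans_lt hy.1, hy.2.trans_le hb⟩
  rw [(hasDerivAt_cos_mul_deriv_of_ode (hφ'.differentiable one_ne_zero y) hcos.ne'
    (hode y hy)).deriv]
  have := mul_pos (mul_pos hc hcos) (hpos y hy)
  linarith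

theorem first_eigenfunction_strictly_decreasing_general
    (φ : ℝ → ℝ) (hsmooth : ContDiff ℝ 2 φ)
    (hODE : ∀ x ∈ Set.Ico 0 (π/2),
      deriv (deriv φ) x - Real.tan x * deriv φ x + 2 * φ x = 0)
    (hφ'0 : deriv φ 0 = 0)
    (x₀ : ℝ) (hx₀ : x₀ ∈ Set.Ioo 0 (π/2))
    (hpos : ∀ x ∈ Set.Ico 0 x₀, 0 < φ x) :
    ∀ x ∈ Set.Ioo 0 x₀, deriv φ x < 0 := by
  intro x ⟨hx0, hxx₀⟩
  have hxπ : x < π / 2 := hxx₀.trans hx₀.2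
  have hlt : cos x * deriv φ x < cos 0 * deriv φ 0 :=
    cos_mul_deriv_lt_of_ode hsmooth two_pos (by linarith [pi_pos]) hx0 hxπ.le
      (fun y hy => hODE y ⟨hy.1.le, hy.2.trans hxπ⟩)
      (fun y hy => hpos y ⟨hy.1.le, hy.2.trans hxx₀⟩)
  rw [hφ'0, mul_zero] at hlt
  exact neg_of_mul_neg_right hlt (cos_pos_of_mem_Ioo ⟨by linarith [pi_pos], hxπ⟩).le

/-- the rotationally invariant solution of `(Δ+2)φ = 0` with
`φ(0) = 1`, `φ'(0) = 0`, positive before its first zero `x₀`, is strictly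
decreasing on `(0, x₀)`. -/
theorem first_eigenfunction_strictly_decreasing
    (φ : ℝ → ℝ) (hsmooth : ContDiff ℝ 2 φ)
    (hODE : ∀ x ∈ Set.Ico 0 (π/2),
      deriv (deriv φ) x - Real.tan x * deriv φ x + 2 * φ x = 0)
    (hφ0 : φ 0 = 1) (hφ'0 : deriv φ 0 = 0)
    (x₀ : ℝ) (hx₀ : x₀ ∈ Set.Ioo 0 (π/2))
    (hpos : ∀ x ∈ Set.Ico 0 x₀, 0 < φ x)
    (hzero : φ x₀ = 0) :
    ∀ x ∈ Set.Ioo 0 x₀, deriv φ x < 0 :=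
  first_eigenfunction_strictly_decreasing_general φ hsmooth hODE hφ'0 x₀ hx₀ hpos
end

section
/- In the balanced-configuration Lemma with m_par = 1 there is no solution: if φ is rotationally invariant on S², smooth on the open northern hemisphere, satisfies (Δ+2)φ = 0 there and is smooth up to the north pole, and φ is continuous on S² and symmetric under reflection through the equator, then φ vanishes on the equator. In particular φ cannot be strictly positive on all of S². -/
open Set Real Filter Topology

/-- Remark Rmerone: a rotationally invariant function on the
sphere, symmetric through the equator, satisfying `(Δ+2)φ = 0` on the open
northern hemisphere and smooth up to the north pole, must vanish on the
equator; in particular it cannot be everywhere strictly positive. -/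
theorem no_balanced_configuration_one_parallel
    (φ : ℝ → ℝ)
    (hcont : ContinuousOn φ (Set.Icc (-(π/2)) (π/2)))
    (heven : ∀ x, φ (-x) = φ x)
    (hsmooth : ContDiffOn ℝ (⊤ : ℕ∞) φ (Set.Icc 0 (π/2)))
    (hODE : ∀ x ∈ Set.Ioo 0 (π/2),
      deriv (deriv φ) x - Real.tan x * deriv φ x + 2 * φ x = 0) :
    φ 0 = 0 ∧ ¬ (∀ x ∈ Set.Icc (-(π/2)) (π/2), 0 < φ x) := by
  have hπ : (0:ℝ) < π/2 := by positivity
  set S : Set ℝ := Set.Icc 0 (π/2) with hS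
  set ψ : ℝ → ℝ := derivWithin φ S with hψ
  have hUD : UniqueDiffOn ℝ S := uniqueDiffOn_Icc hπ
  have hψcont : ContinuousOn ψ S :=
    hsmooth.continuousOn_derivWithin hUD (by simp)
  have hψeq : ∀ x ∈ Set.Ioo 0 (π/2), ψ x = deriv φ x := fun x hx =>
    derivWithin_of_mem_nhds (Icc_mem_nhds hx.1 hx.2)
  set G : ℝ → ℝ := fun x => ψ x * (Real.sin x * Real.cos x) - φ x * Real.cos x ^ 2 with hG
  have hGcont : ContinuousOn G S := by
    apply ContinuousOn.sub
    · exact hψcont.mul (Real.continuous_sin.continuousOn.mul Real.continuous_cos.continuousOn)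
    · exact hsmooth.continuousOn.mul (Real.continuous_cos.continuousOn.pow 2)
  have hsm' : ContDiffOn ℝ (⊤ : ℕ∞) φ (Set.Ioo 0 (π/2)) := hsmooth.mono Set.Ioo_subset_Icc_self
  have hderiv2 : DifferentiableOn ℝ (deriv φ) (Set.Ioo 0 (π/2)) :=
    (hsm'.deriv_of_isOpen (m := 1) isOpen_Ioo (WithTop.coe_le_coe.mpr le_top)).differentiableOn one_ne_zero
  have hG0 : ∀ x ∈ Set.Ioo 0 (π/2), HasDerivAt G 0 x := by
    intro x hx
    have hxnh : Set.Ioo 0 (π/2) ∈ 𝓝 x := isOpen_Ioo.mem_nhds hx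
    have hcos : Real.cos x ≠ 0 :=
      ne_of_gt (Real.cos_pos_of_mem_Ioo ⟨by linarith [hx.1, Real.pi_pos], hx.2⟩)
    have hφd : HasDerivAt φ (deriv φ x) x :=
      (((hsm'.differentiableOn (by simp)).differentiableAt hxnh)).hasDerivAt
    have hφ2 : HasDerivAt (deriv φ) (deriv (deriv φ) x) x :=
      (hderiv2.differentiableAt hxnh).hasDerivAt
    have hF : HasDerivAt
        (fun y => deriv φ y * (Real.sin y * Real.cos y) - φ y * Real.cos y ^ 2)
        (deriv (deriv φ) x * (Real.sin x * Real.cos x)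
          + deriv φ x * (Real.cos x * Real.cos x + Real.sin x * (-Real.sin x))
          - (deriv φ x * Real.cos x ^ 2
            + φ x * ((2 : ℕ) * Real.cos x ^ 1 * (-Real.sin x)))) x := by
      exact (hφ2.mul ((Real.hasDerivAt_sin x).mul (Real.hasDerivAt_cos x))).sub
        (hφd.mul ((Real.hasDerivAt_cos x).pow 2))
    have hode := hODE x hx
    rw [Real.tan_eq_sin_div_cos] at hode
    have h2 : deriv (deriv φ) x = Real.sin x / Real.cos x * deriv φ x - 2 * φ x := by
      linarith
    have hd : deriv (deriv φ) x * (Real.sin x * Real.cos x)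
          + deriv φ x * (Real.cos x * Real.cos x + Real.sin x * (-Real.sin x))
          - (deriv φ x * Real.cos x ^ 2
            + φ x * ((2 : ℕ) * Real.cos x ^ 1 * (-Real.sin x))) = 0 := by
      rw [h2]
      field_simp
      ring
    rw [hd] at hF
    have hGF : G =ᶠ[𝓝 x]
        fun y => deriv φ y * (Real.sin y * Real.cos y) - φ y * Real.cos y ^ 2 := by
      filter_upwards [hxnh] with y hy
      rw [hG]
      simp only [hψeq y hy]
    exact hF.congr_of_eventuallyEq hGF
  have hGpi : G (π/2) = 0 := by
    simp [hG, Real.cos_pi_div_two]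
  have hGzero : ∀ x ∈ Set.Ioo 0 (π/2), G x = 0 := by
    intro x hx
    have hsub : Set.Icc x (π/2) ⊆ S := Set.Icc_subset_Icc hx.1.le le_rfl
    have := constant_of_has_deriv_right_zero (f := G) (a := x) (b := π/2)
      (hGcont.mono hsub)
      (fun t ht => (hG0 t ⟨lt_of_lt_of_le hx.1 ht.1, ht.2⟩).hasDerivWithinAt)
      (π/2) ⟨hx.2.le, le_rfl⟩
    rw [hGpi] at this
    linarith [this]
  have hne : (𝓝[Set.Ioo 0 (π/2)] (0:ℝ)).NeBot := by
    rw [← mem_closure_iff_nhdsWithin_neBot, closure_Ioo (ne_of_lt hπ)]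
    exact ⟨le_rfl, hπ.le⟩
  have ht1 : Tendsto G (𝓝[Set.Ioo 0 (π/2)] 0) (𝓝 (G 0)) :=
    (hGcont 0 ⟨le_rfl, hπ.le⟩).mono Set.Ioo_subset_Icc_self
  have ht2 : Tendsto G (𝓝[Set.Ioo 0 (π/2)] 0) (𝓝 0) := by
    apply Tendsto.congr' _ (tendsto_const_nhds (α := ℝ))
    exact eventually_nhdsWithin_of_forall (fun x hx => (hGzero x hx).symm)
  have hG00 : G 0 = 0 := tendsto_nhds_unique ht1 ht2
  have hφ0 : φ 0 = 0 := by
    simp [hG] at hG00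
    linarith
  refine ⟨hφ0, fun h => ?_⟩
  have := h 0 ⟨by linarith, hπ.le⟩
  rw [hφ0] at this
  exact lt_irrefl 0 this
end
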